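/- arXiv:2205.02868 — 2 statements merged into one kernel-verified Lean document; each statement's English description precedes it below -/
import Mathlib

section
/- Let g : ℝⁿ → ℝ be twice continuously differentiable on a neighborhood of a point x̄, and let f : ℝⁿ → (−∞,∞] be proper, lower semicontinuous, and primal lower nice at x̄. Then the sum f + g is primal lower nice at x̄. -/
open Filter Topology
open scoped ENNReal NNReal

/-- The slope `|∇f|(x)`: the infimum of all `δ > 0` such that `x` is a local minimizer of
`f + δ·d(·,x)`; it equals `∞` at points where `f x = ⊤`. -/
noncomputable def slopeM {X : Type*} [MetricSpace X] (f : X → EReal) (x : X) : ℝ≥0∞ :=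
  if f x = ⊤ then ⊤
  else sInf {δ : ℝ≥0∞ | ∃ c : ℝ, 0 < c ∧ δ = ENNReal.ofReal c ∧
    ∀ᶠ z in 𝓝 x, f x ≤ f z + ((c * dist z x : ℝ) : EReal)}

/-- The modulus of identifiability: `liminf_{x → xbar, x ∉ M, f(x) → f(xbar)} |∇f|(x)`. -/
noncomputable def identModulus {X : Type*} [MetricSpace X] (f : X → EReal) (M : Set X)
    (xbar : X) : ℝ≥0∞ :=
  Filter.liminf (slopeM f) (𝓝[Mᶜ] xbar ⊓ Filter.comap f (𝓝 (f xbar)))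

/-- `M` is an identifiable set for `f` at `xbar`: it is closed, contains `xbar`, and the
modulus of identifiability is strictly positive. -/
def Identifiable {X : Type*} [MetricSpace X] (f : X → EReal) (M : Set X) (xbar : X) : Prop :=
  IsClosed M ∧ xbar ∈ M ∧ 0 < identModulus f M xbar

/-- `y` is a regular (Fréchet) subgradient of `f` at `x`:
`liminf_{z → x} (f(z) − f(x) − ⟨y, z − x⟩)/‖z − x‖ ≥ 0`. -/
def RegularSubgradient {n : ℕ} (f : EuclideanSpace ℝ (Fin n) → EReal)
    (x y : EuclideanSpace ℝ (Fin n)) : Prop :=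
  f x ≠ ⊤ ∧ ∀ ε : ℝ, 0 < ε →
    ∀ᶠ z in 𝓝 x, f x + (((inner ℝ y (z - x) : ℝ) - ε * ‖z - x‖ : ℝ) : EReal) ≤ f z

/-- The limiting subdifferential `∂f(x)`: all limits of regular subgradients `y_r` at points
`x_r → x` with `f(x_r) → f(x)`. -/
def LimitingSubdiff {n : ℕ} (f : EuclideanSpace ℝ (Fin n) → EReal)
    (x : EuclideanSpace ℝ (Fin n)) : Set (EuclideanSpace ℝ (Fin n)) :=
  {y | f x ≠ ⊤ ∧ ∃ xr yr : ℕ → EuclideanSpace ℝ (Fin n),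
    (∀ r, RegularSubgradient f (xr r) (yr r)) ∧
    Tendsto xr atTop (𝓝 x) ∧ Tendsto (fun r => f (xr r)) atTop (𝓝 (f x)) ∧
    Tendsto yr atTop (𝓝 y)}

/-- `f` is primal lower nice at `xbar`. -/
def PrimalLowerNice {n : ℕ} (f : EuclideanSpace ℝ (Fin n) → EReal)
    (xbar : EuclideanSpace ℝ (Fin n)) : Prop :=
  ∃ (α β : ℝ) (U : Set (EuclideanSpace ℝ (Fin n))), U ∈ 𝓝 xbar ∧
    ∀ x ∈ U, ∀ x' ∈ U, ∀ y ∈ LimitingSubdiff f x,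
      f x + (((inner ℝ y (x' - x) : ℝ) - (α + β * ‖y‖) * ‖x' - x‖ ^ 2 : ℝ) : EReal) ≤ f x'

/-! Near `xbar` the gradient of `g` is Lipschitz and bounded, say by `M`, so
`g x' ≥ g x + ⟪∇g x, x' - x⟫ - K‖x' - x‖²` there. Since `g` is `C¹`, regular subgradients of
`f + g` at nearby points are shifted by `∇g` into regular subgradients of `f`, and by continuity
of `∇g` the same holds for limiting subgradients: `y ∈ ∂(f + g)(x)` gives `y - ∇g x ∈ ∂f(x)`.
Adding the primal-lower-nice inequality for `f` at `y - ∇g x` to the quadratic lower bound for `g`,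
and using `‖y - ∇g x‖ ≤ ‖y‖ + M`, gives the inequality for `f + g` with constants
`α + |β| M + K` and `|β|`. -/

theorem EReal.add_coe_le_add_coe_iff {a b : EReal} {c d : ℝ} :
    a + c ≤ b + d ↔ a + ((c - d : ℝ) : EReal) ≤ b := by
  induction a <;> induction b <;> simp [← EReal.coe_add, -EReal.coe_sub]
  case coe.coe => constructor <;> intro h <;> linarith

theorem EReal.ne_top_of_add_coe_ne_top {a : EReal} {c : ℝ} (h : a + c ≠ ⊤) : a ≠ ⊤ :=
  (EReal.add_ne_top_iff_ne_top_left (EReal.coe_ne_bot c) (EReal.coe_ne_top c)).mp h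

theorem EReal.tendsto_of_tendsto_add_coe {ι : Type*} {l : Filter ι} {u : ι → EReal} {v : ι → ℝ}
    {a : EReal} {c : ℝ} (h : Tendsto (fun i => u i + v i) l (𝓝 (a + c)))
    (hv : Tendsto v l (𝓝 c)) : Tendsto u l (𝓝 a) := by
  have hcancel : ∀ (b : EReal) (r : ℝ), b + r + ((-r : ℝ) : EReal) = b := fun b r => by
    rw [EReal.coe_neg, ← sub_eq_add_neg, EReal.add_sub_cancel_right]
  have hadd := EReal.continuousAt_add (p := (a + c, ((-c : ℝ) : EReal)))
    (Or.inr (EReal.coe_ne_bot _)) (Or.inr (EReal.coe_ne_top _))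
  have := hadd.tendsto.comp (h.prodMk_nhds ((continuous_coe_real_ereal.tendsto _).comp hv.neg))
  simpa only [Function.comp_def, hcancel] using this

theorem Convex.norm_image_sub_sub_fderiv_le_of_lipschitzOnWith
    {E F : Type*} [NormedAddCommGroup E] [NormedSpace ℝ E] [NormedAddCommGroup F] [NormedSpace ℝ F]
    {f : E → F} {s : Set E} {K : NNReal} (hs : Convex ℝ s)
    (hf : ∀ x ∈ s, DifferentiableAt ℝ f x) (hlip : LipschitzOnWith K (fderiv ℝ f) s)
    {x y : E} (hx : x ∈ s) (hy : y ∈ s) :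
    ‖f y - f x - fderiv ℝ f x (y - x)‖ ≤ K * ‖y - x‖ ^ 2 := by
  set t := s ∩ Metric.closedBall x ‖y - x‖
  have hbound : ∀ z ∈ t, ‖fderiv ℝ f z - fderiv ℝ f x‖ ≤ K * ‖y - x‖ := fun z hz => by
    rw [← dist_eq_norm]
    exact (hlip.dist_le_mul z hz.1 x hx).trans
      (mul_le_mul_of_nonneg_left hz.2 K.coe_nonneg)
  have hxt : x ∈ t := ⟨hx, Metric.mem_closedBall_self (norm_nonneg _)⟩
  have hyt : y ∈ t := ⟨hy, by rw [Metric.mem_closedBall, dist_eq_norm]⟩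
  calc ‖f y - f x - fderiv ℝ f x (y - x)‖ ≤ K * ‖y - x‖ * ‖y - x‖ :=
        (hs.inter (convex_closedBall _ _)).norm_image_sub_le_of_norm_fderiv_le'
          (fun z hz => hf z hz.1) hbound hxt hyt
    _ = K * ‖y - x‖ ^ 2 := by ring

theorem ContDiffAt.exists_mem_nhds_norm_image_sub_sub_fderiv_le
    {E F : Type*} [NormedAddCommGroup E] [NormedSpace ℝ E] [NormedAddCommGroup F] [NormedSpace ℝ F]
    {f : E → F} {x₀ : E} (hf : ContDiffAt ℝ 2 f x₀) :
    ∃ K M : ℝ, ∃ s ∈ 𝓝 x₀, ∀ x ∈ s, ‖fderiv ℝ f x‖ ≤ M ∧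
      ∀ y ∈ s, ‖f y - f x - fderiv ℝ f x (y - x)‖ ≤ K * ‖y - x‖ ^ 2 := by
  obtain ⟨K, t, ht, hlip⟩ := (hf.fderiv_right (m := 1) le_rfl).exists_lipschitzOnWith
  have hdiff : ∀ᶠ x in 𝓝 x₀, DifferentiableAt ℝ f x :=
    (hf.eventually (by simp)).mono fun x hx => hx.differentiableAt two_ne_zero
  have hbdd : ∀ᶠ x in 𝓝 x₀, ‖fderiv ℝ f x‖ ≤ ‖fderiv ℝ f x₀‖ + 1 :=
    (hf.continuousAt_fderiv two_ne_zero).norm.eventually (eventually_le_nhds (by linarith))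
  obtain ⟨r, hr, hball⟩ := Metric.mem_nhds_iff.mp (inter_mem ht (hdiff.and hbdd))
  refine ⟨K, ‖fderiv ℝ f x₀‖ + 1, Metric.ball x₀ r, Metric.ball_mem_nhds x₀ hr,
    fun x hx => ⟨(hball hx).2.2, fun y hy => ?_⟩⟩
  exact (convex_ball x₀ r).norm_image_sub_sub_fderiv_le_of_lipschitzOnWith
    (fun z hz => (hball hz).2.1) (hlip.mono fun z hz => (hball hz).1) hx hy

open scoped Gradient

section Subdifferential

variable {n : ℕ} {f : EuclideanSpace ℝ (Fin n) → EReal} {g : EuclideanSpace ℝ (Fin n) → ℝ}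
  {x y : EuclideanSpace ℝ (Fin n)}

theorem RegularSubgradient.sub_gradient_of_add (hg : DifferentiableAt ℝ g x)
    (hy : RegularSubgradient (fun z => f z + g z) x y) : RegularSubgradient f x (y - ∇ g x) := by
  refine ⟨EReal.ne_top_of_add_coe_ne_top hy.1, fun ε hε => ?_⟩
  have htaylor : ∀ᶠ z in 𝓝 x, ‖g z - g x - inner ℝ (∇ g x) (z - x)‖ ≤ ε / 2 * ‖z - x‖ :=
    (hasGradientAt_iff_isLittleO.mp hg.hasGradientAt).def (by positivity)
  filter_upwards [hy.2 (ε / 2) (by positivity), htaylor] with z hz htz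
  rw [add_assoc, ← EReal.coe_add, EReal.add_coe_le_add_coe_iff] at hz
  refine le_trans (add_le_add_right (EReal.coe_le_coe_iff.mpr ?_) _) hz
  rw [Real.norm_eq_abs, abs_le] at htz
  rw [inner_sub_left]
  linarith [htz.1]

theorem sub_gradient_mem_limitingSubdiff_of_add (hg : ContDiffAt ℝ 1 g x)
    (hy : y ∈ LimitingSubdiff (fun z => f z + g z) x) : y - ∇ g x ∈ LimitingSubdiff f x := by
  obtain ⟨hne, xr, yr, hreg, hxr, hfxr, hyr⟩ := hy
  have hdiff : ∀ᶠ z in 𝓝 x, DifferentiableAt ℝ g z :=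
    (hg.eventually (by simp)).mono fun z hz => hz.differentiableAt one_ne_zero
  obtain ⟨N, hN⟩ := eventually_atTop.mp (hxr.eventually hdiff)
  have hshift : Tendsto (fun s => xr (s + N)) atTop (𝓝 x) := hxr.comp (tendsto_add_atTop_nat N)
  have hgrad : ContinuousAt (∇ g) x :=
    (InnerProductSpace.toDual ℝ _).symm.continuous.continuousAt.comp
      (hg.continuousAt_fderiv one_ne_zero)
  refine ⟨EReal.ne_top_of_add_coe_ne_top hne, fun s => xr (s + N),
    fun s => yr (s + N) - ∇ g (xr (s + N)),
    fun s => (hreg (s + N)).sub_gradient_of_add (hN _ (Nat.le_add_left N s)), hshift, ?_, ?_⟩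
  · exact EReal.tendsto_of_tendsto_add_coe (hfxr.comp (tendsto_add_atTop_nat N))
      (hdiff.self_of_nhds.continuousAt.tendsto.comp hshift)
  · exact (hyr.comp (tendsto_add_atTop_nat N)).sub (hgrad.tendsto.comp hshift)

end Subdifferential

theorem primalLowerNice_add_smooth_general {n : ℕ}
    (g : EuclideanSpace ℝ (Fin n) → ℝ) (xbar : EuclideanSpace ℝ (Fin n))
    (hg : ∃ U ∈ 𝓝 xbar, ContDiffOn ℝ 2 g U)
    (f : EuclideanSpace ℝ (Fin n) → EReal)
    (hpln : PrimalLowerNice f xbar) :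
    PrimalLowerNice (fun z => f z + ((g z : ℝ) : EReal)) xbar := by
  obtain ⟨α, β, U, hU, hf⟩ := hpln
  obtain ⟨V, hV, hgV⟩ := hg
  have hg₂ : ContDiffAt ℝ 2 g xbar := hgV.contDiffAt hV
  have hC1 : ∀ᶠ x in 𝓝 xbar, ContDiffAt ℝ 1 g x := (hg₂.of_le one_le_two).eventually (by simp)
  obtain ⟨K, M, W, hW, hgW⟩ := hg₂.exists_mem_nhds_norm_image_sub_sub_fderiv_le
  refine ⟨α + |β| * M + K, |β|, U ∩ W ∩ {x | ContDiffAt ℝ 1 g x},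
    inter_mem (inter_mem hU hW) hC1, ?_⟩
  rintro x ⟨⟨hxU, hxW⟩, hxC1 : ContDiffAt ℝ 1 g x⟩ x' ⟨⟨hx'U, hx'W⟩, -⟩ y hy
  have hfx := hf x hxU x' hx'U _ (sub_gradient_mem_limitingSubdiff_of_add hxC1 hy)
  obtain ⟨hM, htaylor⟩ := hgW x hxW
  have hgrad : ‖∇ g x‖ ≤ M := by rwa [gradient, LinearIsometryEquiv.norm_map]
  have hquad := htaylor x' hx'W
  rw [← inner_gradient_left, Real.norm_eq_abs, abs_le] at hquad
  have hβ : β * ‖y - ∇ g x‖ ≤ |β| * (‖y‖ + M) :=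
    (mul_le_mul_of_nonneg_right (le_abs_self β) (norm_nonneg _)).trans
      (mul_le_mul_of_nonneg_left ((norm_sub_le _ _).trans (by linarith)) (abs_nonneg β))
  show f x + g x + _ ≤ f x' + g x'
  rw [add_assoc, ← EReal.coe_add, EReal.add_coe_le_add_coe_iff]
  refine le_trans (add_le_add_right (EReal.coe_le_coe_iff.mpr ?_) _) hfx
  rw [inner_sub_left]
  linarith [mul_le_mul_of_nonneg_right hβ (sq_nonneg ‖x' - x‖)]

/-- Primal lower nice preservation: adding a function that is twice continuously
differentiable near `xbar` preserves the primal lower nice property at `xbar`. -/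
theorem primalLowerNice_add_smooth {n : ℕ}
    (g : EuclideanSpace ℝ (Fin n) → ℝ) (xbar : EuclideanSpace ℝ (Fin n))
    (hg : ∃ U ∈ 𝓝 xbar, ContDiffOn ℝ 2 g U)
    (f : EuclideanSpace ℝ (Fin n) → EReal)
    (hproper : ∃ z, f z ≠ ⊤) (hlsc : LowerSemicontinuous f) (hbot : ∀ z, f z ≠ ⊥)
    (hpln : PrimalLowerNice f xbar) :
    PrimalLowerNice (fun z => f z + ((g z : ℝ) : EReal)) xbar :=
  primalLowerNice_add_smooth_general g xbar hg f hpln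
end

section
/- Let f : ℝⁿ → (−∞,∞] be proper, lower semicontinuous, and primal lower nice at a point x̄ ∈ ℝⁿ. Then there exists another function h : ℝⁿ → (−∞,∞] that is proper, lower semicontinuous, bounded below, primal lower nice at every point of its domain, and agrees identically with f on some neighborhood of x̄. -/
open Filter Topology
open scoped ENNReal NNReal

/-!
Choose a ball `B(x̄, ε)` at every point of which `f` is primal lower nice, and add to `f` a
barrier `γ` that is smooth on the ball, vanishes on `B(x̄, ε/2)`, tends to `+∞` at the boundary
sphere, and is `+∞` outside. Adding a `C²` function preserves primal lower niceness: limiting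
subgradients are shifted by the gradient, and the defining inequality is perturbed by a quadratic
Taylor remainder and a gradient bound. The barrier is continuous as an `EReal`-valued function, so
the sum is lower semicontinuous; it is bounded below because `f` is bounded below on the compact
closed ball; and its domain lies inside the open ball, where `f` is primal lower nice. If `f` is
`+∞` on `B(x̄, ε/2)`, the function that is `0` at one point of `dom f` and `+∞` elsewhere works
instead.
-/

open Set Metric

namespace EReal

lemma add_add_coe_le_add {a b : EReal} {c d s t u : ℝ} (h₁ : a + s ≤ b) (h₂ : c + t ≤ d)
    (hu : u ≤ s + t) : a + c + u ≤ b + d :=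
  calc a + c + u ≤ a + c + ((s + t : ℝ) : EReal) := by gcongr
    _ = (a + s) + ((c + t : ℝ) : EReal) := by push_cast; ac_rfl
    _ ≤ b + d := add_le_add h₁ (by exact_mod_cast h₂)

lemma add_coe_le_of_add_add_coe_le {a b : EReal} {c d s t : ℝ} (h : a + c + t ≤ b + d)
    (hst : s + d ≤ c + t) : a + s ≤ b := by
  rw [← (addLECancellable_coe d).add_le_add_iff_right]
  calc a + s + d = a + ((s + d : ℝ) : EReal) := by push_cast; ac_rfl
    _ ≤ a + ((c + t : ℝ) : EReal) := by gcongr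
    _ = a + c + t := by push_cast; ac_rfl
    _ ≤ b + d := h

lemma tendsto_of_tendsto_add_coe_s18 {α : Type*} {l : Filter α} {u : α → EReal} {v : α → ℝ}
    {a : EReal} {c : ℝ} (h : Tendsto (fun i => u i + v i) l (𝓝 (a + c)))
    (hv : Tendsto v l (𝓝 c)) : Tendsto u l (𝓝 a) := by
  have hneg : Tendsto (fun i => ((-v i : ℝ) : EReal)) l (𝓝 ((-c : ℝ) : EReal)) :=
    (continuous_coe_real_ereal.tendsto _).comp hv.neg
  have := ((continuousAt_add (.inr (coe_ne_bot _)) (.inr (coe_ne_top _))).tendsto.comp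
    (h.prodMk_nhds hneg))
  simpa only [Function.comp_def, coe_neg, ← sub_eq_add_neg, add_sub_cancel_right] using this

end EReal

lemma LowerSemicontinuous.exists_coe_le_of_isCompact {X : Type*} [TopologicalSpace X]
    {f : X → EReal} (hf : LowerSemicontinuous f) (hbot : ∀ z, f z ≠ ⊥) {K : Set X}
    (hK : IsCompact K) : ∃ c : ℝ, ∀ z ∈ K, (c : EReal) ≤ f z := by
  rcases K.eq_empty_or_nonempty with rfl | hne
  · exact ⟨0, by simp⟩
  obtain ⟨a, -, ha⟩ := (hf.lowerSemicontinuousOn K).exists_isMinOn hne hK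
  obtain ⟨c, -, hc⟩ := EReal.lt_iff_exists_real_btwn.1 (bot_lt_iff_ne_bot.2 (hbot a))
  exact ⟨c, fun z hz => hc.le.trans (ha hz)⟩

theorem ContDiffAt.exists_norm_image_sub_sub_fderiv_le {E F : Type*} [NormedAddCommGroup E]
    [NormedSpace ℝ E] [NormedAddCommGroup F] [NormedSpace ℝ F] {f : E → F} {z : E}
    (hf : ContDiffAt ℝ 2 f z) :
    ∃ K : ℝ, ∃ V ∈ 𝓝 z, ∀ x ∈ V, ∀ w ∈ V,
      ‖f w - f x - fderiv ℝ f x (w - x)‖ ≤ K * ‖w - x‖ ^ 2 := by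
  obtain ⟨K, t, ht, hlip⟩ := (hf.fderiv_right (m := 1) (by norm_num)).exists_lipschitzOnWith
  obtain ⟨ρ, hρ, hsub⟩ := Metric.mem_nhds_iff.1 (inter_mem ht (hf.eventually (by simp)))
  have hC2 : ∀ u ∈ ball z ρ, ContDiffAt ℝ 2 f u := fun u hu => (hsub hu).2
  refine ⟨K, ball z ρ, ball_mem_nhds z hρ, fun x hx w hw => ?_⟩
  have hseg : segment ℝ x w ⊆ ball z ρ := (convex_ball z ρ).segment_subset hx hw
  have hderiv : ∀ u ∈ segment ℝ x w,
      HasFDerivWithinAt f (fderiv ℝ f u) (segment ℝ x w) u := fun u hu =>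
    ((hC2 u (hseg hu)).differentiableAt (by norm_num)).hasFDerivAt.hasFDerivWithinAt
  have hbound : ∀ u ∈ segment ℝ x w, ‖fderiv ℝ f u - fderiv ℝ f x‖ ≤ K * ‖w - x‖ := by
    intro u hu
    have hux := segment_subset_closedBall_left x w hu
    rw [mem_closedBall, dist_comm x] at hux
    rw [← dist_eq_norm, ← dist_eq_norm]
    exact (hlip.dist_le_mul u (hsub (hseg hu)).1 x (hsub hx).1).trans (by gcongr)
  calc ‖f w - f x - fderiv ℝ f x (w - x)‖ ≤ K * ‖w - x‖ * ‖w - x‖ :=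
        (convex_segment x w).norm_image_sub_le_of_norm_hasFDerivWithin_le' hderiv hbound
          (left_mem_segment ℝ x w) (right_mem_segment ℝ x w)
    _ = K * ‖w - x‖ ^ 2 := by ring

open Gradient in
theorem ContDiffAt.continuousAt_gradient {V : Type*} [NormedAddCommGroup V] [InnerProductSpace ℝ V]
    [CompleteSpace V] {γ : V → ℝ} {x : V} (hγ : ContDiffAt ℝ 1 γ x) : ContinuousAt (∇ γ) x :=
  (InnerProductSpace.toDual ℝ V).symm.continuous.continuousAt.comp
    (hγ.continuousAt_fderiv one_ne_zero)

open Real in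
lemma tendsto_smoothTransition_div_sub {a b : ℝ} (hab : a < b) :
    Tendsto (fun t => smoothTransition ((t - a) / (b - a)) / (b - t)) (𝓝[<] b) atTop := by
  have h₁ : Tendsto (fun t => smoothTransition ((t - a) / (b - a))) (𝓝[<] b) (𝓝 1) := by
    have hc : Continuous fun t => smoothTransition ((t - a) / (b - a)) :=
      smoothTransition.continuous.comp ((continuous_id.sub continuous_const).div_const _)
    simpa [div_self (sub_ne_zero.2 hab.ne')] using (hc.tendsto b).mono_left nhdsWithin_le_nhds
  have h₂ : Tendsto (fun t => (b - t)⁻¹) (𝓝[<] b) atTop := by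
    refine tendsto_inv_nhdsGT_zero.comp (tendsto_nhdsWithin_iff.2 ⟨?_, ?_⟩)
    · simpa using ((continuous_sub_left b).tendsto b).mono_left nhdsWithin_le_nhds
    · exact eventually_nhdsWithin_of_forall fun t (ht : t < b) => sub_pos.2 ht
  simpa only [div_eq_mul_inv] using h₁.pos_mul_atTop one_pos h₂

lemma tendsto_comp_nhdsWithin_preimage_Iio {X : Type*} [TopologicalSpace X] {q : X → ℝ}
    (hq : Continuous q) {φ : ℝ → ℝ} {b : ℝ} (hφ : Tendsto φ (𝓝[<] b) atTop) {z : X}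
    (hz : b ≤ q z) : Tendsto (φ ∘ q) (𝓝[q ⁻¹' Iio b] z) atTop := by
  refine tendsto_atTop.2 fun c => ?_
  obtain ⟨l, hl, hlφ⟩ := mem_nhdsLT_iff_exists_Ioo_subset.1 (tendsto_atTop.1 hφ c)
  filter_upwards [nhdsWithin_le_nhds (hq.continuousAt.eventually (lt_mem_nhds (hl.trans_le hz))),
    self_mem_nhdsWithin] with w hlw hwb
  exact hlφ ⟨hlw, hwb⟩

open Real ContDiff in
theorem exists_barrier_ball {V : Type*} [NormedAddCommGroup V] [InnerProductSpace ℝ V] (x₀ : V)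
    {r R : ℝ} (hr : 0 ≤ r) (hrR : r < R) :
    ∃ γ : V → ℝ, ContDiffOn ℝ ∞ γ (ball x₀ R) ∧ (∀ w ∈ ball x₀ R, 0 ≤ γ w) ∧
      (∀ w ∈ ball x₀ r, γ w = 0) ∧ ∀ z ∉ ball x₀ R, Tendsto γ (𝓝[ball x₀ R] z) atTop := by
  set q : V → ℝ := fun w => ‖w - x₀‖ ^ 2
  have hq : ContDiff ℝ ∞ q := (contDiff_id.sub contDiff_const).norm_sq ℝ
  have hball : ∀ ρ, 0 ≤ ρ → ball x₀ ρ = q ⁻¹' Iio (ρ ^ 2) := fun ρ hρ => by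
    ext w; simp [q, dist_eq_norm, sq_lt_sq₀ (norm_nonneg _) hρ]
  have hab : r ^ 2 < R ^ 2 := by gcongr
  rw [hball R (hr.trans hrR.le), hball r hr]
  refine ⟨(fun t => smoothTransition ((t - r ^ 2) / (R ^ 2 - r ^ 2)) / (R ^ 2 - t)) ∘ q,
    ?_, fun w hw => ?_, fun w hw => ?_, fun z hz => ?_⟩
  · refine ContDiffOn.comp (t := Iio (R ^ 2)) ?_ hq.contDiffOn (mapsTo_preimage _ _)
    exact (smoothTransition.contDiff.comp
      ((contDiff_id.sub contDiff_const).div_const _)).contDiffOn.div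
        (contDiff_const.sub contDiff_id).contDiffOn fun t ht => (sub_pos.2 ht).ne'
  · exact div_nonneg (smoothTransition.nonneg _) (sub_pos.2 hw).le
  · have : (q w - r ^ 2) / (R ^ 2 - r ^ 2) ≤ 0 :=
      div_nonpos_of_nonpos_of_nonneg (sub_nonpos.2 (le_of_lt hw)) (sub_pos.2 hab).le
    simp [smoothTransition.zero_of_nonpos this]
  · exact tendsto_comp_nhdsWithin_preimage_Iio hq.continuous
      (tendsto_smoothTransition_div_sub hab) (not_lt.1 hz)

section Barrier

variable {X : Type*} {O : Set X} {γ : X → ℝ} {z : X}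

open Classical in
noncomputable def barrier (O : Set X) (γ : X → ℝ) (z : X) : EReal :=
  if z ∈ O then (γ z : EReal) else ⊤

lemma barrier_of_mem (hz : z ∈ O) : barrier O γ z = γ z := if_pos hz

lemma barrier_of_notMem (hz : z ∉ O) : barrier O γ z = ⊤ := if_neg hz

lemma barrier_ne_bot : barrier O γ z ≠ ⊥ := by
  unfold barrier; split_ifs <;> simp

lemma mem_of_add_barrier_ne_top {a : EReal} (ha : a ≠ ⊥) (h : a + barrier O γ z ≠ ⊤) :
    z ∈ O := by
  by_contra hz
  exact h (by rw [barrier_of_notMem hz, EReal.add_top_of_ne_bot ha])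

lemma coe_le_add_barrier {a : EReal} {c : ℝ} (ha : a ≠ ⊥) (hc : z ∈ O → (c : EReal) ≤ a)
    (hγ : z ∈ O → 0 ≤ γ z) : (c : EReal) ≤ a + barrier O γ z := by
  by_cases hz : z ∈ O
  · simpa [barrier_of_mem hz] using add_le_add (hc hz) (EReal.coe_nonneg.2 (hγ hz))
  · rw [barrier_of_notMem hz, EReal.add_top_of_ne_bot ha]; exact le_top

lemma continuous_barrier [TopologicalSpace X] (hO : IsOpen O) (hγ : ContinuousOn γ O)
    (htop : ∀ z ∉ O, Tendsto γ (𝓝[O] z) atTop) : Continuous (barrier O γ) := by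
  refine continuous_iff_continuousAt.2 fun z => ?_
  by_cases hz : z ∈ O
  · exact (continuous_coe_real_ereal.continuousAt.comp (hγ.continuousAt (hO.mem_nhds hz))).congr
      (eventually_of_mem (hO.mem_nhds hz) fun w hw => (barrier_of_mem hw).symm)
  · rw [ContinuousAt, barrier_of_notMem hz,
      nhds_eq_nhdsWithin_sup_nhdsWithin z (union_compl_self O).symm]
    exact (EReal.tendsto_coe_nhds_top_iff.2 (htop z hz)).congr'
        (eventually_nhdsWithin_of_forall fun w hw => (barrier_of_mem hw).symm) |>.sup <|
      tendsto_const_nhds.congr'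
        (eventually_nhdsWithin_of_forall fun w hw => (barrier_of_notMem hw).symm)

end Barrier

section Subdifferential

variable {n : ℕ}

local notation "ℝⁿ" => EuclideanSpace ℝ (Fin n)

variable {f g F : EuclideanSpace ℝ (Fin n) → EReal} {γ : EuclideanSpace ℝ (Fin n) → ℝ}
  {x y z : EuclideanSpace ℝ (Fin n)}

open Gradient

lemma mem_limitingSubdiff_of_eventually {xr yr : ℕ → ℝⁿ} (hx : f x ≠ ⊤)
    (hxr : Tendsto xr atTop (𝓝 x)) (hfr : Tendsto (fun r => f (xr r)) atTop (𝓝 (f x)))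
    (hyr : Tendsto yr atTop (𝓝 y)) (hreg : ∀ᶠ r in atTop, RegularSubgradient f (xr r) (yr r)) :
    y ∈ LimitingSubdiff f x := by
  obtain ⟨N, hN⟩ := eventually_atTop.1 hreg
  have hshift := tendsto_add_atTop_nat N
  exact ⟨hx, fun r => xr (r + N), fun r => yr (r + N), fun r => hN _ (Nat.le_add_left N r),
    hxr.comp hshift, hfr.comp hshift, hyr.comp hshift⟩

lemma RegularSubgradient.congr (hf : RegularSubgradient f x y) (hfg : f =ᶠ[𝓝 x] g) :
    RegularSubgradient g x y := by
  refine ⟨hfg.eq_of_nhds ▸ hf.1, fun ε hε => ?_⟩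
  filter_upwards [hf.2 ε hε, hfg] with z hz hfgz
  rwa [← hfgz, ← hfg.eq_of_nhds]

lemma limitingSubdiff_subset_of_eventuallyEq (hfg : f =ᶠ[𝓝 x] g) :
    LimitingSubdiff f x ⊆ LimitingSubdiff g x := by
  rintro y ⟨hx, xr, yr, hreg, hxr, hfr, hyr⟩
  have hev := hxr.eventually (eventually_eventuallyEq_nhds.2 hfg)
  refine mem_limitingSubdiff_of_eventually (hfg.eq_of_nhds ▸ hx) hxr ?_ hyr
    (hev.mono fun r hr => (hreg r).congr hr)
  rw [← hfg.eq_of_nhds]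
  exact hfr.congr' (hev.mono fun r hr => hr.eq_of_nhds)

theorem RegularSubgradient.sub_of_hasGradientAt {v : ℝⁿ}
    (hy : RegularSubgradient (fun w => F w + γ w) x y) (hγ : HasGradientAt γ v x) :
    RegularSubgradient F x (y - v) := by
  refine ⟨fun h => hy.1 (by simp [h]), fun ε hε => ?_⟩
  filter_upwards [hy.2 (ε / 2) (half_pos hε),
    (hasGradientAt_iff_isLittleO.1 hγ).def (half_pos hε)] with z hz hγz
  refine EReal.add_coe_le_of_add_add_coe_le hz ?_
  rw [Real.norm_eq_abs, abs_le] at hγz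
  rw [inner_sub_left]
  linarith [hγz.1, norm_nonneg (z - x)]

theorem sub_gradient_mem_limitingSubdiff (hγ : ContDiffAt ℝ 1 γ x)
    (hy : y ∈ LimitingSubdiff (fun w => F w + γ w) x) : y - ∇ γ x ∈ LimitingSubdiff F x := by
  obtain ⟨hx, xr, yr, hreg, hxr, hFr, hyr⟩ := hy
  have hgrad : ∀ᶠ r in atTop, HasGradientAt γ (∇ γ (xr r)) (xr r) :=
    hxr.eventually ((hγ.eventually (by simp)).mono fun w hw =>
      (hw.differentiableAt one_ne_zero).hasGradientAt)
  exact mem_limitingSubdiff_of_eventually (fun h => hx (by simp [h])) hxr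
    (EReal.tendsto_of_tendsto_add_coe_s18 hFr (hγ.continuousAt.tendsto.comp hxr))
    (hyr.sub (hγ.continuousAt_gradient.tendsto.comp hxr))
    (hgrad.mono fun r hr => (hreg r).sub_of_hasGradientAt hr)

theorem PrimalLowerNice.eventually (hf : PrimalLowerNice f z) :
    ∀ᶠ w in 𝓝 z, PrimalLowerNice f w := by
  obtain ⟨α, β, U, hU, hfU⟩ := hf
  filter_upwards [eventually_mem_nhds_iff.2 hU] with w hw
  exact ⟨α, β, U, hw, hfU⟩

theorem PrimalLowerNice.congr (hf : PrimalLowerNice f z) (hfg : f =ᶠ[𝓝 z] g) :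
    PrimalLowerNice g z := by
  obtain ⟨α, β, U, hU, hfU⟩ := hf
  refine ⟨α, β, U ∩ {w | f =ᶠ[𝓝 w] g}, inter_mem hU (eventually_eventuallyEq_nhds.2 hfg), ?_⟩
  rintro x ⟨hxU, hx⟩ x' ⟨hx'U, hx'⟩ y hy
  rw [← hx.eq_of_nhds, ← hx'.eq_of_nhds]
  exact hfU x hxU x' hx'U y (limitingSubdiff_subset_of_eventuallyEq hx.symm hy)

theorem primalLowerNice_of_subsingleton (hf : {w | f w ≠ ⊤}.Subsingleton) (z : ℝⁿ) :
    PrimalLowerNice f z := by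
  refine ⟨0, 0, univ, univ_mem, fun x _ x' _ y hy => ?_⟩
  by_cases hx' : f x' = ⊤
  · rw [hx']; exact le_top
  · obtain rfl := hf hx' hy.1
    simp

theorem PrimalLowerNice.add_contDiffAt (hF : PrimalLowerNice F z) (hγ : ContDiffAt ℝ 2 γ z) :
    PrimalLowerNice (fun w => F w + γ w) z := by
  obtain ⟨α, β, U, hU, hFU⟩ := hF
  obtain ⟨K, V, hV, hK⟩ := hγ.exists_norm_image_sub_sub_fderiv_le
  have hγ₁ : ContDiffAt ℝ 1 γ z := hγ.of_le one_le_two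
  set G := ‖∇ γ z‖ + 1
  set β' := max β 0
  -- `‖∇ γ‖ < G` near `z` gives `β * ‖y - ∇ γ x‖ ≤ β' * G + β' * ‖y‖`, and `K` absorbs the
  -- Taylor remainder of `γ`.
  refine ⟨α + β' * G + K, β', U ∩ V ∩ {w | ContDiffAt ℝ 1 γ w} ∩ {w | ‖∇ γ w‖ < G},
    inter_mem (inter_mem (inter_mem hU hV) (hγ₁.eventually (by simp)))
      (hγ₁.continuousAt_gradient.norm.eventually (gt_mem_nhds (lt_add_one _))), ?_⟩
  rintro x ⟨⟨⟨hxU, hxV⟩, hx₁⟩, hxG⟩ x' ⟨⟨⟨hx'U, hx'V⟩, -⟩, -⟩ y hy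
  have hFx := hFU x hxU x' hx'U _ (sub_gradient_mem_limitingSubdiff hx₁ hy)
  have hγx := hK x hxV x' hx'V
  have hinner : fderiv ℝ γ x (x' - x) = inner ℝ (∇ γ x) (x' - x) :=
    InnerProductSpace.toDual_symm_apply.symm
  rw [hinner, Real.norm_eq_abs, abs_le] at hγx
  change ‖_‖ < G at hxG
  have hβ : β * ‖y - ∇ γ x‖ ≤ β' * G + β' * ‖y‖ :=
    calc β * ‖y - ∇ γ x‖ ≤ β' * ‖y - ∇ γ x‖ := by gcongr; exact le_max_left _ _
      _ ≤ β' * (‖y‖ + G) :=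
        mul_le_mul_of_nonneg_left ((norm_sub_le _ _).trans (by linarith)) (le_max_right _ _)
      _ = β' * G + β' * ‖y‖ := by ring
  refine EReal.add_add_coe_le_add hFx (c := γ x) (d := γ x')
    (t := inner ℝ (∇ γ x) (x' - x) - K * ‖x' - x‖ ^ 2) (by linarith [hγx.1]) ?_
  rw [inner_sub_left]
  nlinarith [mul_le_mul_of_nonneg_right hβ (sq_nonneg ‖x' - x‖)]

theorem PrimalLowerNice.add_barrier {O : Set ℝⁿ} (hF : PrimalLowerNice F z) (hO : IsOpen O)
    (hγ : ContDiffOn ℝ 2 γ O) (hz : z ∈ O) :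
    PrimalLowerNice (fun w => F w + barrier O γ w) z :=
  (hF.add_contDiffAt (hγ.contDiffAt (hO.mem_nhds hz))).congr
    (eventually_of_mem (hO.mem_nhds hz) fun w hw => by dsimp only; rw [barrier_of_mem hw])

def IsPrimalLowerNiceLocalization (f : ℝⁿ → EReal) (xbar : ℝⁿ) (h : ℝⁿ → EReal) : Prop :=
  (∃ z, h z ≠ ⊤) ∧ LowerSemicontinuous h ∧ (∀ z, h z ≠ ⊥) ∧
    (∃ c : ℝ, ∀ z, (c : EReal) ≤ h z) ∧ (∀ z, h z ≠ ⊤ → PrimalLowerNice h z) ∧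
    (∀ᶠ z in 𝓝 xbar, h z = f z)

theorem exists_isPrimalLowerNiceLocalization_of_forall_mem_ball {xbar : ℝⁿ} {ε : ℝ}
    (hlsc : LowerSemicontinuous f) (hbot : ∀ z, f z ≠ ⊥) (hε : 0 < ε)
    (hpln : ∀ z ∈ ball xbar ε, PrimalLowerNice f z) (hfin : ∃ z ∈ ball xbar (ε / 2), f z ≠ ⊤) :
    ∃ h, IsPrimalLowerNiceLocalization f xbar h := by
  obtain ⟨z₀, hz₀, hfz₀⟩ := hfin
  obtain ⟨γ, hγ, hγ0, hγr, hγtop⟩ :=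
    exists_barrier_ball xbar (half_pos hε).le (half_lt_self hε)
  obtain ⟨c, hc⟩ := hlsc.exists_coe_le_of_isCompact hbot (isCompact_closedBall xbar ε)
  have hagree : ∀ z ∈ ball xbar (ε / 2), f z + barrier (ball xbar ε) γ z = f z := fun z hz => by
    rw [barrier_of_mem (ball_subset_ball (half_le_self hε.le) hz), hγr z hz, EReal.coe_zero,
      add_zero]
  refine ⟨fun z => f z + barrier (ball xbar ε) γ z, ⟨z₀, by dsimp only; rwa [hagree z₀ hz₀]⟩,
    hlsc.add' (continuous_barrier isOpen_ball hγ.continuousOn hγtop).lowerSemicontinuous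
      fun z => EReal.continuousAt_add (.inr barrier_ne_bot) (.inl (hbot z)),
    fun z => EReal.add_ne_bot_iff.2 ⟨hbot z, barrier_ne_bot⟩,
    ⟨c, fun z => coe_le_add_barrier (hbot z) (fun hz => hc z (ball_subset_closedBall hz))
      (hγ0 z)⟩, fun z hz => ?_, eventually_of_mem (ball_mem_nhds xbar (half_pos hε)) hagree⟩
  have hzO := mem_of_add_barrier_ne_top (hbot z) hz
  exact (hpln z hzO).add_barrier isOpen_ball (hγ.of_le (WithTop.coe_le_coe.2 le_top)) hzO

theorem isPrimalLowerNiceLocalization_indicator {xbar p : ℝⁿ} {r : ℝ} (hp : f p ≠ ⊤)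
    (hr : 0 < r) (hf : ∀ z ∈ ball xbar r, f z = ⊤) :
    IsPrimalLowerNiceLocalization f xbar (indicator {p}ᶜ ⊤) := by
  have htop : ∀ z ≠ p, indicator {p}ᶜ ⊤ z = (⊤ : EReal) := fun z hz => by simp [hz]
  refine ⟨⟨p, by simp⟩, isOpen_compl_singleton.lowerSemicontinuous_indicator le_top, fun z => ?_,
    ⟨0, fun z => indicator_nonneg (fun _ _ => le_top) z⟩,
    fun z _ => primalLowerNice_of_subsingleton ?_ z, ?_⟩
  · by_cases hz : z = p <;> simp [hz]
  · exact fun z hz w hw => (not_not.1 (mt (htop z) hz)).trans (not_not.1 (mt (htop w) hw)).symm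
  · filter_upwards [ball_mem_nhds xbar hr] with z hz
    rw [hf z hz, htop z (by rintro rfl; exact hp (hf _ hz))]

end Subdifferential

/-- Localization: a function that is primal lower nice at `xbar` agrees near `xbar` with a
proper closed function that is bounded below and primal lower nice at every point of its
domain. -/
theorem primalLowerNice_localization {n : ℕ}
    (f : EuclideanSpace ℝ (Fin n) → EReal)
    (hproper : ∃ z, f z ≠ ⊤) (hlsc : LowerSemicontinuous f) (hbot : ∀ z, f z ≠ ⊥)
    (xbar : EuclideanSpace ℝ (Fin n)) (hpln : PrimalLowerNice f xbar) :
    ∃ h : EuclideanSpace ℝ (Fin n) → EReal,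
      (∃ z, h z ≠ ⊤) ∧ LowerSemicontinuous h ∧ (∀ z, h z ≠ ⊥) ∧
      (∃ c : ℝ, ∀ z, (c : EReal) ≤ h z) ∧
      (∀ z, h z ≠ ⊤ → PrimalLowerNice h z) ∧
      (∀ᶠ z in 𝓝 xbar, h z = f z) := by
  obtain ⟨ε, hε, hpln⟩ := Metric.eventually_nhds_iff_ball.1 hpln.eventually
  by_cases hfin : ∃ z ∈ ball xbar (ε / 2), f z ≠ ⊤
  · exact exists_isPrimalLowerNiceLocalization_of_forall_mem_ball hlsc hbot hε hpln hfin
  · push Not at hfin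
    obtain ⟨p, hp⟩ := hproper
    exact ⟨_, isPrimalLowerNiceLocalization_indicator hp (half_pos hε) hfin⟩
end
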